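/- (Equivalence of the leap-frog discrete energy) Let N be an even positive integer, 𝒯_N = {−N/2,…,N/2−1}, μ_l = 2πl/(b−a), h = (b−a)/N, and τ > 0 with 2τπ/h ≤ 1 (equivalently 2τ·max_{l∈𝒯_N}|μ_l| ≤ 1, noting max_{l∈𝒯_N}|μ_l| = π/h). For families (η̂_l)_{l∈𝒯_N} and (ζ̂_l)_{l∈𝒯_N} of vectors in ℂ², set ‖η‖² = (b−a) ∑_{l∈𝒯_N} |η̂_l|², ‖ζ‖² = (b−a) ∑_{l∈𝒯_N} |ζ̂_l|², and define the energy ℰ = ‖η‖² + ‖ζ‖² − 2τ(b−a)·Im( ∑_{l∈𝒯_N} μ_l (η̂_l)* σ₁ ζ̂_l ). Then (1/2)(‖η‖² + ‖ζ‖²) ≤ ℰ ≤ (3/2)(‖η‖² + ‖ζ‖²). -/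

import Mathlib

open Complex Matrix Finset

noncomputable section

/-- The Pauli matrix σ₁. -/
def σ1 : Matrix (Fin 2) (Fin 2) ℂ := !![0, 1; 1, 0]

/-- The index set 𝒯_N = {−N/2, …, N/2−1}. -/
def TN (N : ℕ) : Finset ℤ := Finset.Icc (-(N : ℤ) / 2) ((N : ℤ) / 2 - 1)

/-- The Fourier frequency μ_l = 2πl/(b−a); `bma` stands for b−a. -/
def μ (bma : ℝ) (l : ℤ) : ℝ := 2 * Real.pi * l / bma

/-- The squared norm ‖η‖² = (b−a)∑_{l∈𝒯_N}|η̂_l|² of a family of Fourier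
coefficients. -/
def fnsq (a b : ℝ) (N : ℕ) (η : ℤ → Fin 2 → ℂ) : ℝ :=
  (b - a) * ∑ l ∈ TN N, ∑ i, ‖η l i‖ ^ 2

/-!
Since σ₁ only swaps the two components, `|x* σ₁ y| ≤ |x| |y| ≤ (|x|² + |y|²)/2` for every
`x y ∈ ℂ²`. The CFL condition says `2τ|μ_l| ≤ 1` on `𝒯_N`, because `max |μ_l| = π/h` there.
Hence the coupling term `2τ(b−a) Im(∑ μ_l η̂_l* σ₁ ζ̂_l)` is bounded in
absolute value by `(‖η‖² + ‖ζ‖²)/2`, which is the two-sided estimate.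
-/

theorem star_dotProduct_σ1_mulVec (x y : Fin 2 → ℂ) :
    star x ⬝ᵥ σ1 *ᵥ y = star (x 0) * y 1 + star (x 1) * y 0 := by
  simp [σ1, dotProduct, Matrix.mulVec, Fin.sum_univ_two]

theorem norm_star_dotProduct_σ1_mulVec_le (x y : Fin 2 → ℂ) :
    ‖star x ⬝ᵥ σ1 *ᵥ y‖ ≤ (∑ i, ‖x i‖ ^ 2 + ∑ i, ‖y i‖ ^ 2) / 2 := by
  rw [star_dotProduct_σ1_mulVec, Fin.sum_univ_two, Fin.sum_univ_two]
  calc ‖star (x 0) * y 1 + star (x 1) * y 0‖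
      ≤ ‖x 0‖ * ‖y 1‖ + ‖x 1‖ * ‖y 0‖ := by
        simpa only [norm_mul, norm_star] using norm_add_le (star (x 0) * y 1) (star (x 1) * y 0)
    _ ≤ (‖x 0‖ ^ 2 + ‖x 1‖ ^ 2 + (‖y 0‖ ^ 2 + ‖y 1‖ ^ 2)) / 2 := by
        nlinarith [sq_nonneg (‖x 0‖ - ‖y 1‖), sq_nonneg (‖x 1‖ - ‖y 0‖)]

theorem two_mul_abs_le_of_mem_TN {N : ℕ} (hN : Even N) {l : ℤ} (hl : l ∈ TN N) :
    2 * |l| ≤ N := by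
  obtain ⟨k, rfl⟩ := hN
  simp only [TN, Finset.mem_Icc] at hl
  push_cast at hl ⊢
  rcases abs_cases l with ⟨habs, -⟩ | ⟨habs, -⟩ <;> rw [habs] <;> omega

theorem abs_μ_le_of_mem_TN {bma : ℝ} (hbma : 0 ≤ bma) {N : ℕ} (hN : Even N) {l : ℤ}
    (hl : l ∈ TN N) : |μ bma l| ≤ Real.pi / (bma / N) := by
  have hl2 : 2 * |(l : ℝ)| ≤ N := by exact_mod_cast two_mul_abs_le_of_mem_TN hN hl
  calc |μ bma l| = Real.pi * (2 * |(l : ℝ)|) / bma := by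
        rw [μ, abs_div, abs_mul, abs_of_nonneg hbma, abs_of_nonneg Real.two_pi_pos.le]
        ring
    _ ≤ Real.pi * N / bma := by gcongr
    _ = Real.pi / (bma / N) := (div_div_eq_mul_div _ _ _).symm

theorem two_mul_abs_im_mul_le {τ m : ℝ} (hτ : 0 ≤ τ) (hm : 2 * τ * |m| ≤ 1)
    (x y : Fin 2 → ℂ) :
    2 * τ * |((m : ℂ) * (star x ⬝ᵥ σ1 *ᵥ y)).im| ≤ (∑ i, ‖x i‖ ^ 2 + ∑ i, ‖y i‖ ^ 2) / 2 :=
  calc 2 * τ * |((m : ℂ) * (star x ⬝ᵥ σ1 *ᵥ y)).im|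
      ≤ 2 * τ * ‖(m : ℂ) * (star x ⬝ᵥ σ1 *ᵥ y)‖ := by gcongr; exact abs_im_le_norm _
    _ = 2 * τ * |m| * ‖star x ⬝ᵥ σ1 *ᵥ y‖ := by rw [norm_mul, norm_real, Real.norm_eq_abs]; ring
    _ ≤ ‖star x ⬝ᵥ σ1 *ᵥ y‖ := mul_le_of_le_one_left (norm_nonneg _) hm
    _ ≤ _ := norm_star_dotProduct_σ1_mulVec_le x y

theorem abs_leapfrog_coupling_le {a b τ : ℝ} (hab : a ≤ b) (hτ : 0 ≤ τ) {N : ℕ}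
    (hcfl : ∀ l ∈ TN N, 2 * τ * |μ (b - a) l| ≤ 1) (η ζ : ℤ → Fin 2 → ℂ) :
    |2 * τ * (b - a) *
        (∑ l ∈ TN N, ((μ (b - a) l : ℝ) : ℂ) * (star (η l) ⬝ᵥ σ1 *ᵥ ζ l)).im| ≤
      (fnsq a b N η + fnsq a b N ζ) / 2 := by
  have hba : 0 ≤ b - a := sub_nonneg.2 hab
  have hsum : 2 * τ *
      |(∑ l ∈ TN N, ((μ (b - a) l : ℝ) : ℂ) * (star (η l) ⬝ᵥ σ1 *ᵥ ζ l)).im| ≤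
        ∑ l ∈ TN N, (∑ i, ‖η l i‖ ^ 2 + ∑ i, ‖ζ l i‖ ^ 2) / 2 := by
    rw [im_sum]
    refine (mul_le_mul_of_nonneg_left (abs_sum_le_sum_abs _ _) (by positivity)).trans ?_
    rw [mul_sum]
    gcongr with l hl
    exact two_mul_abs_im_mul_le hτ (hcfl l hl) (η l) (ζ l)
  rw [abs_mul, abs_of_nonneg (by positivity)]
  calc 2 * τ * (b - a) *
        |(∑ l ∈ TN N, ((μ (b - a) l : ℝ) : ℂ) * (star (η l) ⬝ᵥ σ1 *ᵥ ζ l)).im|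
      = (b - a) * (2 * τ *
        |(∑ l ∈ TN N, ((μ (b - a) l : ℝ) : ℂ) * (star (η l) ⬝ᵥ σ1 *ᵥ ζ l)).im|) := by ring
    _ ≤ (b - a) * ∑ l ∈ TN N, (∑ i, ‖η l i‖ ^ 2 + ∑ i, ‖ζ l i‖ ^ 2) / 2 := by gcongr
    _ = (fnsq a b N η + fnsq a b N ζ) / 2 := by
        rw [fnsq, fnsq, ← sum_div, sum_add_distrib]
        ring

theorem leapfrog_energy_equivalence_general (a b : ℝ) (hab : a < b) (N : ℕ)
    (hNe : Even N) (h τ : ℝ) (hh : h = (b - a) / N) (hτ : 0 < τ)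
    (hcfl : 2 * τ * Real.pi / h ≤ 1)
    (η ζ : ℤ → Fin 2 → ℂ) :
    (1 / 2) * (fnsq a b N η + fnsq a b N ζ) ≤
        fnsq a b N η + fnsq a b N ζ -
          2 * τ * (b - a) *
            (∑ l ∈ TN N, ((μ (b - a) l : ℝ) : ℂ) * (star (η l) ⬝ᵥ σ1.mulVec (ζ l))).im ∧
      fnsq a b N η + fnsq a b N ζ -
          2 * τ * (b - a) *
            (∑ l ∈ TN N, ((μ (b - a) l : ℝ) : ℂ) * (star (η l) ⬝ᵥ σ1.mulVec (ζ l))).im ≤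
        (3 / 2) * (fnsq a b N η + fnsq a b N ζ) := by
  have hμ : ∀ l ∈ TN N, 2 * τ * |μ (b - a) l| ≤ 1 := fun l hl =>
    calc 2 * τ * |μ (b - a) l| ≤ 2 * τ * (Real.pi / h) := by
          rw [hh]
          gcongr
          exact abs_μ_le_of_mem_TN (sub_nonneg.2 hab.le) hNe hl
      _ = 2 * τ * Real.pi / h := by ring
      _ ≤ 1 := hcfl
  have hcoupling := abs_le.1 (abs_leapfrog_coupling_le hab.le hτ.le hμ η ζ)
  constructor <;> linarith [hcoupling.1, hcoupling.2]

/-- Equivalence of the leap-frog discrete energy: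
under the CFL-type condition 2τπ/h ≤ 1, the energy
ℰ = ‖η‖² + ‖ζ‖² − 2τ(b−a)Im(∑_{l∈𝒯_N} μ_l η̂_l* σ₁ ζ̂_l)
satisfies (1/2)(‖η‖² + ‖ζ‖²) ≤ ℰ ≤ (3/2)(‖η‖² + ‖ζ‖²). -/
theorem leapfrog_energy_equivalence (a b : ℝ) (hab : a < b) (N : ℕ) (hN : 0 < N)
    (hNe : Even N) (h τ : ℝ) (hh : h = (b - a) / N) (hτ : 0 < τ)
    (hcfl : 2 * τ * Real.pi / h ≤ 1)
    (η ζ : ℤ → Fin 2 → ℂ) :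
    (1 / 2) * (fnsq a b N η + fnsq a b N ζ) ≤
        fnsq a b N η + fnsq a b N ζ -
          2 * τ * (b - a) *
            (∑ l ∈ TN N, ((μ (b - a) l : ℝ) : ℂ) * (star (η l) ⬝ᵥ σ1.mulVec (ζ l))).im ∧
      fnsq a b N η + fnsq a b N ζ -
          2 * τ * (b - a) *
            (∑ l ∈ TN N, ((μ (b - a) l : ℝ) : ℂ) * (star (η l) ⬝ᵥ σ1.mulVec (ζ l))).im ≤
        (3 / 2) * (fnsq a b N η + fnsq a b N ζ) :=
  leapfrog_energy_equivalence_general a b hab N hNe h τ hh hτ hcfl η ζ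

end
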